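/- arXiv:2510.04473 — 4 statements merged into one kernel-verified Lean document; each statement's English description precedes it below -/
import Mathlib

section
/- Let f : EuclideanSpace ℝ (Fin n) → ℝ be differentiable with ∇f Lipschitz continuous with constant L_g. Let x ∈ EuclideanSpace ℝ (Fin n), Δ > 0, β > 0, and let y_1, …, y_{n+1} ∈ EuclideanSpace ℝ (Fin n) satisfy ‖y_i − x‖ ≤ β·Δ for all i. Let M̂ be the (n+1)×(n+1) real matrix whose i-th row is (1, ((y_i − x)/Δ)_1, …, ((y_i − x)/Δ)_n), and assume M̂ is invertible. Let (c, ĝ_1, …, ĝ_n) := M̂⁻¹·(f(y_1), …, f(y_{n+1})), set g := (ĝ_1/Δ, …, ĝ_n/Δ), and define the linear model m(y) := c + ⟨g, y − x⟩. Then m is fully linear for f in B(x,Δ) with constants κ_mf = (L_g/2)·(1 + √n)·β²·‖M̂⁻¹‖_∞ + L_g/2 and κ_mg = 2·κ_mf. -/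
open scoped RealInnerProductSpace
open Metric

noncomputable section

/-- Matrix–vector multiplication as a map on Euclidean space. -/
def mulVecE {n : ℕ} (H : Matrix (Fin n) (Fin n) ℝ) (v : EuclideanSpace ℝ (Fin n)) :
    EuclideanSpace ℝ (Fin n) :=
  (EuclideanSpace.equiv (Fin n) ℝ).symm (H.mulVec (EuclideanSpace.equiv (Fin n) ℝ v))

/-- Operator 2-norm of a matrix (the norm induced by the Euclidean vector norm). -/
def opNorm {n : ℕ} (H : Matrix (Fin n) (Fin n) ℝ) : ℝ :=
  sSup {r : ℝ | ∃ v : EuclideanSpace ℝ (Fin n), ‖v‖ ≤ 1 ∧ r = ‖mulVecE H v‖}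

/-- Quadratic model about `x` with data `(c, g, H)`. -/
def qm {n : ℕ} (x : EuclideanSpace ℝ (Fin n)) (c : ℝ) (g : EuclideanSpace ℝ (Fin n))
    (H : Matrix (Fin n) (Fin n) ℝ) (y : EuclideanSpace ℝ (Fin n)) : ℝ :=
  c + ⟪g, y - x⟫ + (1 / 2) * ⟪y - x, mulVecE H (y - x)⟫

/-- `m` is a fully linear model for `f` on the closed ball `B(x, Δ)`. -/
def IsFullyLinear {n : ℕ} (f m : EuclideanSpace ℝ (Fin n) → ℝ)
    (x : EuclideanSpace ℝ (Fin n)) (Δ κmf κmg : ℝ) : Prop :=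
  ∀ y ∈ closedBall x Δ,
    |m y - f y| ≤ κmf * Δ ^ 2 ∧ ‖gradient m y - gradient f y‖ ≤ κmg * Δ

/-- `m` is a fully quadratic model for `f` on the closed ball `B(x, Δ)`. -/
def IsFullyQuadratic {n : ℕ} (f m : EuclideanSpace ℝ (Fin n) → ℝ)
    (x : EuclideanSpace ℝ (Fin n)) (Δ κmf κmg κmh : ℝ) : Prop :=
  ∀ y ∈ closedBall x Δ,
    |m y - f y| ≤ κmf * Δ ^ 3 ∧ ‖gradient m y - gradient f y‖ ≤ κmg * Δ ^ 2 ∧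
      ‖fderiv ℝ (gradient m) y - fderiv ℝ (gradient f) y‖ ≤ κmh * Δ

/-- Smallest eigenvalue of a symmetric matrix: the minimum of `⟪u, H u⟫` over unit vectors. -/
def lambdaMin {n : ℕ} (H : Matrix (Fin n) (Fin n) ℝ) : ℝ :=
  sInf {r : ℝ | ∃ u : EuclideanSpace ℝ (Fin n), ‖u‖ = 1 ∧ r = ⟪u, mulVecE H u⟫}

/-- `τ(H) = max(-λ_min(H), 0)`. -/
def tau {n : ℕ} (H : Matrix (Fin n) (Fin n) ℝ) : ℝ := max (-lambdaMin H) 0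

/-- Hessian matrix of `f` at `x`. -/
def hessMat {n : ℕ} (f : EuclideanSpace ℝ (Fin n) → ℝ) (x : EuclideanSpace ℝ (Fin n)) :
    Matrix (Fin n) (Fin n) ℝ :=
  Matrix.of fun i j => fderiv ℝ (gradient f) x (EuclideanSpace.single j 1) i

/-- ℓ∞ operator norm of a matrix: the maximum absolute row sum. -/
def linftyNorm {m k : Type*} [Fintype m] [Fintype k] (A : Matrix m k ℝ) : ℝ :=
  sSup (Set.range fun i => ∑ j, |A i j|)


/-!
Write `w = ∇f(x)`. Since the model interpolates `f` at the `yᵢ`, the matrix `M̂` maps the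
coefficient error `(c - f(x), Δ(g - w))` to the first-order Taylor residuals
`f(yᵢ) - f(x) - ⟪w, yᵢ - x⟫`, each at most `(L_g/2) β² Δ²` by the descent lemma. Hence
`‖M̂⁻¹‖_∞` bounds `|c - f(x)|` and every coordinate of `Δ(g - w)`, and `√n` converts the
coordinate bound into a Euclidean one. The descent lemma at `y ∈ B(x, Δ)` and the Lipschitz
bound on `∇f` then give both estimates.
-/

open scoped NNReal

theorem norm_sub_sub_fderiv_le_of_lipschitzWith {E F : Type*} [NormedAddCommGroup E]
    [NormedSpace ℝ E] [NormedAddCommGroup F] [NormedSpace ℝ F] {f : E → F} {f' : E → E →L[ℝ] F}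
    {L : ℝ≥0} (hf : ∀ z, HasFDerivAt f (f' z) z) (hf' : LipschitzWith L f') (a b : E) :
    ‖f b - f a - f' a (b - a)‖ ≤ L / 2 * ‖b - a‖ ^ 2 := by
  set d := b - a
  let φ : ℝ → F := fun t => f (a + t • d) - f a - t • f' a d
  have hφ : ∀ t, HasDerivAt φ (f' (a + t • d) d - f' a d) t := fun t => by
    have hline : HasDerivAt (fun t : ℝ => a + t • d) d t := by
      simpa using ((hasDerivAt_id t).smul_const d).const_add a
    have := (((hf _).comp_hasDerivAt t hline).sub_const (f a)).sub
      ((hasDerivAt_id t).smul_const (f' a d))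
    rwa [one_smul] at this
  have hbound : ∀ t ∈ Set.Ico (0 : ℝ) 1, ‖f' (a + t • d) d - f' a d‖ ≤ L * ‖d‖ ^ 2 * t := by
    intro t ht
    calc ‖f' (a + t • d) d - f' a d‖ = ‖(f' (a + t • d) - f' a) d‖ := rfl
      _ ≤ ‖f' (a + t • d) - f' a‖ * ‖d‖ := ContinuousLinearMap.le_opNorm _ _
      _ ≤ L * ‖(a + t • d) - a‖ * ‖d‖ := by
          gcongr
          simpa only [dist_eq_norm] using hf'.dist_le_mul (a + t • d) a
      _ = L * ‖d‖ ^ 2 * t := by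
          rw [add_sub_cancel_left, norm_smul, Real.norm_of_nonneg ht.1]
          ring
  have hB : ∀ t : ℝ, HasDerivAt (fun t => L / 2 * ‖d‖ ^ 2 * t ^ 2) (L * ‖d‖ ^ 2 * t) t :=
    fun t => ((hasDerivAt_pow 2 t).const_mul _).congr_deriv (by push_cast; ring)
  have := image_norm_le_of_norm_deriv_right_le_deriv_boundary
    (fun t _ => (hφ t).continuousAt.continuousWithinAt) (fun t _ => (hφ t).hasDerivWithinAt)
    (by simp [φ]) hB hbound (Set.right_mem_Icc.2 zero_le_one)
  simpa [φ, d] using this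

section InnerProductSpace

variable {E : Type*} [NormedAddCommGroup E] [InnerProductSpace ℝ E] [CompleteSpace E]

theorem abs_sub_sub_inner_gradient_le {f : E → ℝ} (hf : Differentiable ℝ f) {L : ℝ≥0}
    (hLip : LipschitzWith L (gradient f)) (a b : E) :
    |f b - f a - ⟪gradient f a, b - a⟫| ≤ L / 2 * ‖b - a‖ ^ 2 := by
  have hLip' : LipschitzWith L fun z => InnerProductSpace.toDual ℝ E (gradient f z) := by
    simpa using (InnerProductSpace.toDual ℝ E).lipschitz.comp hLip
  simpa using norm_sub_sub_fderiv_le_of_lipschitzWith (fun z => (hf z).hasGradientAt) hLip' a b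

theorem gradient_const_add_inner_sub (c : ℝ) (g x z : E) :
    gradient (fun z => c + ⟪g, z - x⟫) z = g := by
  have hderiv : HasFDerivAt (fun z => c + ⟪g, z - x⟫) (InnerProductSpace.toDual ℝ E g) z := by
    simpa [inner_sub_right] using
      ((InnerProductSpace.toDual ℝ E g).hasFDerivAt.sub_const ⟪g, x⟫).const_add c
  exact (hasFDerivAt_iff_hasGradientAt.1 hderiv).gradient.trans
    ((InnerProductSpace.toDual ℝ E).symm_apply_apply g)

theorem abs_const_add_inner_sub_sub_le {f : E → ℝ} (hf : Differentiable ℝ f) {L : ℝ≥0}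
    (hLip : LipschitzWith L (gradient f)) (c : ℝ) (g x z : E) :
    |c + ⟪g, z - x⟫ - f z| ≤
      |c - f x| + ‖g - gradient f x‖ * ‖z - x‖ + L / 2 * ‖z - x‖ ^ 2 := by
  have hsplit : c + ⟪g, z - x⟫ - f z =
      (c - f x) + ⟪g - gradient f x, z - x⟫ - (f z - f x - ⟪gradient f x, z - x⟫) := by
    rw [inner_sub_left]
    ring
  rw [hsplit]
  refine (abs_sub _ _).trans (add_le_add ((abs_add_le _ _).trans ?_) ?_)
  · exact add_le_add le_rfl (abs_real_inner_le_norm _ _)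
  · exact abs_sub_sub_inner_gradient_le hf hLip x z

theorem norm_sub_gradient_le {f : E → ℝ} {L : ℝ≥0} (hLip : LipschitzWith L (gradient f))
    (g x z : E) : ‖g - gradient f z‖ ≤ ‖g - gradient f x‖ + L * ‖z - x‖ := by
  calc ‖g - gradient f z‖ ≤ ‖g - gradient f x‖ + ‖gradient f x - gradient f z‖ :=
        norm_sub_le_norm_sub_add_norm_sub _ _ _
    _ ≤ ‖g - gradient f x‖ + L * ‖z - x‖ := by
        gcongr
        simpa only [dist_eq_norm, norm_sub_rev x z] using hLip.dist_le_mul x z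

end InnerProductSpace

theorem EuclideanSpace.norm_le_sqrt_card_mul {ι : Type*} [Fintype ι] {u : EuclideanSpace ℝ ι}
    {C : ℝ} (hC : 0 ≤ C) (hu : ∀ j, |u j| ≤ C) : ‖u‖ ≤ √(Fintype.card ι) * C := by
  rw [EuclideanSpace.norm_eq, ← Real.sqrt_sq hC, ← Real.sqrt_mul (Nat.cast_nonneg _)]
  gcongr
  calc ∑ j, ‖u j‖ ^ 2 ≤ ∑ _j : ι, C ^ 2 := by
        gcongr with j
        exact (Real.norm_eq_abs _).trans_le (hu j)
    _ = Fintype.card ι * C ^ 2 := by simp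

theorem IsFullyLinear.mono {n : ℕ} {f m : EuclideanSpace ℝ (Fin n) → ℝ}
    {x : EuclideanSpace ℝ (Fin n)} {Δ κmf κmg κmf' κmg' : ℝ} (h : IsFullyLinear f m x Δ κmf κmg)
    (hΔ : 0 ≤ Δ) (hmf : κmf ≤ κmf') (hmg : κmg ≤ κmg') : IsFullyLinear f m x Δ κmf' κmg' :=
  fun z hz => ⟨(h z hz).1.trans (by gcongr), (h z hz).2.trans (by gcongr)⟩

theorem isFullyLinear_const_add_inner_sub {n : ℕ} {f : EuclideanSpace ℝ (Fin n) → ℝ}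
    (hf : Differentiable ℝ f) {L : ℝ≥0} (hLip : LipschitzWith L (gradient f))
    {x g : EuclideanSpace ℝ (Fin n)} {c Δ κ₀ κ₁ : ℝ} (hc : |c - f x| ≤ κ₀ * Δ ^ 2)
    (hg : ‖g - gradient f x‖ ≤ κ₁ * Δ) :
    IsFullyLinear f (fun z => c + ⟪g, z - x⟫) x Δ (κ₀ + κ₁ + L / 2) (κ₁ + L) := by
  intro z hz
  rw [mem_closedBall, dist_eq_norm] at hz
  have hΔ : 0 ≤ Δ := (norm_nonneg _).trans hz
  have hκ₁ : 0 ≤ κ₁ * Δ := (norm_nonneg _).trans hg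
  refine ⟨(abs_const_add_inner_sub_sub_le hf hLip c g x z).trans ?_, ?_⟩
  · calc |c - f x| + ‖g - gradient f x‖ * ‖z - x‖ + L / 2 * ‖z - x‖ ^ 2
        ≤ κ₀ * Δ ^ 2 + κ₁ * Δ * Δ + L / 2 * Δ ^ 2 := by gcongr
      _ = (κ₀ + κ₁ + L / 2) * Δ ^ 2 := by ring
  · rw [gradient_const_add_inner_sub]
    calc ‖g - gradient f z‖ ≤ ‖g - gradient f x‖ + L * ‖z - x‖ := norm_sub_gradient_le hLip g x z
      _ ≤ κ₁ * Δ + L * Δ := by gcongr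
      _ = (κ₁ + L) * Δ := by ring

theorem row_sum_le_linftyNorm {m k : Type*} [Fintype m] [Fintype k] (A : Matrix m k ℝ) (i : m) :
    ∑ j, |A i j| ≤ linftyNorm A :=
  le_csSup (Set.finite_range _).bddAbove ⟨i, rfl⟩

theorem linftyNorm_nonneg {m k : Type*} [Fintype m] [Fintype k] [Nonempty m]
    (A : Matrix m k ℝ) : 0 ≤ linftyNorm A :=
  (Finset.sum_nonneg fun _ _ => abs_nonneg _).trans
    (row_sum_le_linftyNorm A (Classical.arbitrary m))

theorem abs_mulVec_le_linftyNorm_mul {m k : Type*} [Fintype m] [Fintype k] (A : Matrix m k ℝ)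
    {r : k → ℝ} {R : ℝ} (hR : 0 ≤ R) (hr : ∀ j, |r j| ≤ R) (i : m) :
    |(A.mulVec r) i| ≤ linftyNorm A * R :=
  calc |(A.mulVec r) i| = |∑ j, A i j * r j| := rfl
    _ ≤ ∑ j, |A i j| * |r j| := (Finset.abs_sum_le_sum_abs _ _).trans_eq (by simp only [abs_mul])
    _ ≤ ∑ j, |A i j| * R := by gcongr with j; exact hr j
    _ = (∑ j, |A i j|) * R := Finset.sum_mul _ _ _ |>.symm
    _ ≤ linftyNorm A * R := by gcongr; exact row_sum_le_linftyNorm A i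

section Interpolation

variable {n : ℕ} {x : EuclideanSpace ℝ (Fin n)} {Δ : ℝ} {y : Fin (n + 1) → EuclideanSpace ℝ (Fin n)}
  {M : Matrix (Fin (n + 1)) (Fin (n + 1)) ℝ}

theorem mulVec_cons_eq_affine (hΔ : Δ ≠ 0)
    (hM : ∀ i, M i = Fin.cons 1 fun j : Fin n => (y i - x) j / Δ) (a : ℝ)
    (u : EuclideanSpace ℝ (Fin n)) :
    M.mulVec (Fin.cons a fun j => Δ * u j) = fun i => a + ⟪u, y i - x⟫ := by
  funext i
  simp only [Matrix.mulVec, dotProduct, Fin.sum_univ_succ, hM, Fin.cons_zero, Fin.cons_succ,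
    one_mul, PiLp.inner_apply, RCLike.inner_apply, conj_trivial]
  congr 1
  refine Finset.sum_congr rfl fun j _ => ?_
  field_simp

theorem const_add_inner_sub_eq_of_coeff_eq_inv_mulVec (hΔ : Δ ≠ 0)
    (hM : ∀ i, M i = Fin.cons 1 fun j : Fin n => (y i - x) j / Δ) (hinv : IsUnit M.det)
    {v coeff : Fin (n + 1) → ℝ} (hcoeff : coeff = M⁻¹.mulVec v) {c : ℝ} (hc : c = coeff 0)
    {g : EuclideanSpace ℝ (Fin n)} (hg : ∀ j : Fin n, g j = coeff j.succ / Δ) (i : Fin (n + 1)) :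
    c + ⟪g, y i - x⟫ = v i := by
  have hcoeff' : coeff = Fin.cons c fun j => Δ * g j := by
    rw [hc, ← Fin.cons_self_tail coeff]
    congr
    funext j
    simp [Fin.tail, hg, mul_div_cancel₀ _ hΔ]
  rw [← congrFun (mulVec_cons_eq_affine hΔ hM c g) i, ← hcoeff', hcoeff,
    Matrix.mulVec_mulVec, Matrix.mul_nonsing_inv _ hinv, Matrix.one_mulVec]

theorem abs_sub_le_and_norm_sub_le_of_interpolates (hΔ : 0 < Δ)
    (hM : ∀ i, M i = Fin.cons 1 fun j : Fin n => (y i - x) j / Δ) (hinv : IsUnit M.det)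
    {v : Fin (n + 1) → ℝ} {c : ℝ} {g : EuclideanSpace ℝ (Fin n)}
    (hinterp : ∀ i, c + ⟪g, y i - x⟫ = v i) (a : ℝ) (u : EuclideanSpace ℝ (Fin n)) {R : ℝ}
    (hR : ∀ i, |v i - a - ⟪u, y i - x⟫| ≤ R) :
    |c - a| ≤ linftyNorm M⁻¹ * R ∧ ‖g - u‖ ≤ √n * (linftyNorm M⁻¹ * R / Δ) := by
  have hsolve : (Fin.cons (c - a) fun j => Δ * (g - u) j : Fin (n + 1) → ℝ) =
      M⁻¹.mulVec fun i => v i - a - ⟪u, y i - x⟫ := by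
    have hres : (fun i => v i - a - ⟪u, y i - x⟫) = fun i => (c - a) + ⟪g - u, y i - x⟫ :=
      funext fun i => by rw [inner_sub_left, ← hinterp i]; ring
    rw [hres, ← mulVec_cons_eq_affine hΔ.ne' hM, Matrix.mulVec_mulVec,
      Matrix.nonsing_inv_mul _ hinv, Matrix.one_mulVec]
  have herr : ∀ k, |(Fin.cons (c - a) fun j => Δ * (g - u) j : Fin (n + 1) → ℝ) k|
      ≤ linftyNorm M⁻¹ * R := fun k => by
    rw [hsolve]
    exact abs_mulVec_le_linftyNorm_mul _ ((abs_nonneg _).trans (hR 0)) hR k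
  refine ⟨by simpa using herr 0, ?_⟩
  have hR0 : 0 ≤ linftyNorm M⁻¹ * R / Δ :=
    div_nonneg ((abs_nonneg _).trans (herr 0)) hΔ.le
  simpa using EuclideanSpace.norm_le_sqrt_card_mul (u := g - u) hR0 fun j => by
    have := herr j.succ
    rw [Fin.cons_succ, abs_mul, abs_of_pos hΔ] at this
    rw [le_div_iff₀ hΔ]
    linarith

end Interpolation

theorem linear_interpolation_fully_linear_general {n : ℕ}
    (f : EuclideanSpace ℝ (Fin n) → ℝ) (hf : Differentiable ℝ f)
    (Lg : NNReal) (hLip : LipschitzWith Lg (gradient f))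
    (x : EuclideanSpace ℝ (Fin n)) (Δ β : ℝ) (hΔ : 0 < Δ)
    (y : Fin (n + 1) → EuclideanSpace ℝ (Fin n))
    (hy : ∀ i, ‖y i - x‖ ≤ β * Δ)
    (Mhat : Matrix (Fin (n + 1)) (Fin (n + 1)) ℝ)
    (hMhat : ∀ i, Mhat i = Fin.cons 1 fun j : Fin n => (y i - x) j / Δ)
    (hinv : IsUnit Mhat.det)
    (coeff : Fin (n + 1) → ℝ) (hcoeff : coeff = Mhat⁻¹.mulVec fun i => f (y i))
    (c : ℝ) (hc : c = coeff 0)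
    (g : EuclideanSpace ℝ (Fin n)) (hg : ∀ j : Fin n, g j = coeff j.succ / Δ)
    (m : EuclideanSpace ℝ (Fin n) → ℝ) (hm : ∀ z, m z = c + ⟪g, z - x⟫) :
    IsFullyLinear f m x Δ
      ((Lg : ℝ) / 2 * (1 + Real.sqrt n) * β ^ 2 * linftyNorm Mhat⁻¹ + (Lg : ℝ) / 2)
      (2 * ((Lg : ℝ) / 2 * (1 + Real.sqrt n) * β ^ 2 * linftyNorm Mhat⁻¹ +
        (Lg : ℝ) / 2)) := by
  obtain rfl : m = fun z => c + ⟪g, z - x⟫ := funext hm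
  have hres : ∀ i, |f (y i) - f x - ⟪gradient f x, y i - x⟫| ≤ Lg / 2 * β ^ 2 * Δ ^ 2 :=
    fun i => (abs_sub_sub_inner_gradient_le hf hLip x (y i)).trans <| by
      rw [mul_assoc, ← mul_pow]
      gcongr
      exact hy i
  obtain ⟨hc_err, hg_err⟩ := abs_sub_le_and_norm_sub_le_of_interpolates hΔ hMhat hinv
    (const_add_inner_sub_eq_of_coeff_eq_inv_mulVec hΔ.ne' hMhat hinv hcoeff hc hg) _ _ hres
  have hκ : 0 ≤ Lg / 2 * β ^ 2 * linftyNorm Mhat⁻¹ := by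
    have := linftyNorm_nonneg Mhat⁻¹
    positivity
  refine (isFullyLinear_const_add_inner_sub hf hLip (κ₀ := Lg / 2 * β ^ 2 * linftyNorm Mhat⁻¹)
    (κ₁ := √n * (Lg / 2 * β ^ 2 * linftyNorm Mhat⁻¹)) ?_ ?_).mono hΔ.le (le_of_eq (by ring)) ?_
  · exact hc_err.trans_eq (by ring)
  · exact hg_err.trans_eq (by field_simp)
  · nlinarith [mul_nonneg (Real.sqrt_nonneg n) hκ]

/-- A linear interpolation model built from `n+1` points within distance `β·Δ` of `x`,
with invertible scaled interpolation matrix `M̂`, is fully linear in `B(x,Δ)`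
(Theorem `thm_fully_linear`). -/
theorem linear_interpolation_fully_linear {n : ℕ}
    (f : EuclideanSpace ℝ (Fin n) → ℝ) (hf : Differentiable ℝ f)
    (Lg : NNReal) (hLip : LipschitzWith Lg (gradient f))
    (x : EuclideanSpace ℝ (Fin n)) (Δ β : ℝ) (hΔ : 0 < Δ) (hβ : 0 < β)
    (y : Fin (n + 1) → EuclideanSpace ℝ (Fin n))
    (hy : ∀ i, ‖y i - x‖ ≤ β * Δ)
    (Mhat : Matrix (Fin (n + 1)) (Fin (n + 1)) ℝ)
    (hMhat : ∀ i, Mhat i = Fin.cons 1 fun j : Fin n => (y i - x) j / Δ)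
    (hinv : IsUnit Mhat.det)
    (coeff : Fin (n + 1) → ℝ) (hcoeff : coeff = Mhat⁻¹.mulVec fun i => f (y i))
    (c : ℝ) (hc : c = coeff 0)
    (g : EuclideanSpace ℝ (Fin n)) (hg : ∀ j : Fin n, g j = coeff j.succ / Δ)
    (m : EuclideanSpace ℝ (Fin n) → ℝ) (hm : ∀ z, m z = c + ⟪g, z - x⟫) :
    IsFullyLinear f m x Δ
      ((Lg : ℝ) / 2 * (1 + Real.sqrt n) * β ^ 2 * linftyNorm Mhat⁻¹ + (Lg : ℝ) / 2)
      (2 * ((Lg : ℝ) / 2 * (1 + Real.sqrt n) * β ^ 2 * linftyNorm Mhat⁻¹ +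
        (Lg : ℝ) / 2)) :=
  linear_interpolation_fully_linear_general f hf Lg hLip x Δ β hΔ y hy Mhat hMhat hinv coeff hcoeff
    c hc g hg m hm
end
end

section
/- Let C ⊆ EuclideanSpace ℝ (Fin n) be a nonempty closed convex set, let x ∈ C, and let f : EuclideanSpace ℝ (Fin n) → ℝ be differentiable at x. Define D(x) := {d : x + d ∈ C and ‖d‖ ≤ 1}, which is nonempty (0 ∈ D(x)) and compact, and for a vector v ∈ EuclideanSpace ℝ (Fin n) define the criticality measure π(v) := |min {⟨v, d⟩ : d ∈ D(x)}|. Suppose g ∈ EuclideanSpace ℝ (Fin n), Δ > 0, and κ_mg > 0 satisfy |⟨g − ∇f(x), d⟩| ≤ κ_mg·Δ for all d ∈ D(x). Then |π(∇f(x)) − π(g)| ≤ κ_mg·Δ. -/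
open scoped RealInnerProductSpace
open Metric

noncomputable section

theorem csInf_image_le_csInf_image_add {α : Type*} {s : Set α} {φ ψ : α → ℝ} {ε : ℝ}
    (hs : s.Nonempty) (hφ : BddBelow (φ '' s)) (h : ∀ a ∈ s, φ a ≤ ψ a + ε) :
    sInf (φ '' s) ≤ sInf (ψ '' s) + ε := by
  rw [← sub_le_iff_le_add]
  refine le_csInf (hs.image ψ) ?_
  rintro _ ⟨a, ha, rfl⟩
  linarith [csInf_le hφ (Set.mem_image_of_mem φ ha), h a ha]

theorem abs_csInf_image_sub_csInf_image_le {α : Type*} {s : Set α} {φ ψ : α → ℝ} {ε : ℝ}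
    (hs : s.Nonempty) (hφ : BddBelow (φ '' s)) (hψ : BddBelow (ψ '' s))
    (h : ∀ a ∈ s, |φ a - ψ a| ≤ ε) :
    |sInf (φ '' s) - sInf (ψ '' s)| ≤ ε := by
  rw [abs_sub_le_iff, sub_le_iff_le_add', sub_le_iff_le_add']
  constructor
  · refine csInf_image_le_csInf_image_add hs hφ fun a ha => ?_
    linarith [(abs_sub_le_iff.1 (h a ha)).1]
  · refine csInf_image_le_csInf_image_add hs hψ fun a ha => ?_
    linarith [(abs_sub_le_iff.1 (h a ha)).2]

section InnerProductSpace

variable {E : Type*} [NormedAddCommGroup E] [InnerProductSpace ℝ E] {D : Set E}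

theorem bddBelow_inner_image (hD : Bornology.IsBounded D) (v : E) :
    BddBelow ((fun d => ⟪v, d⟫) '' D) :=
  ((innerSL ℝ v).lipschitz.isBounded_image hD).bddBelow

theorem abs_csInf_inner_image_sub_le (hne : D.Nonempty) (hD : Bornology.IsBounded D)
    {u v : E} {ε : ℝ} (h : ∀ d ∈ D, |⟪u - v, d⟫| ≤ ε) :
    |sInf ((fun d => ⟪u, d⟫) '' D) - sInf ((fun d => ⟪v, d⟫) '' D)| ≤ ε :=
  abs_csInf_image_sub_csInf_image_le hne (bddBelow_inner_image hD u)
    (bddBelow_inner_image hD v) fun d hd => by simpa only [inner_sub_left] using h d hd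

end InnerProductSpace

theorem convex_criticality_measure_error_general {n : ℕ}
    (C : Set (EuclideanSpace ℝ (Fin n)))
    (x : EuclideanSpace ℝ (Fin n)) (hx : x ∈ C)
    (f : EuclideanSpace ℝ (Fin n) → ℝ)
    (D : Set (EuclideanSpace ℝ (Fin n)))
    (hD : D = {d : EuclideanSpace ℝ (Fin n) | x + d ∈ C ∧ ‖d‖ ≤ 1})
    (pim : EuclideanSpace ℝ (Fin n) → ℝ)
    (hpim : ∀ v, pim v = |sInf ((fun d => ⟪v, d⟫) '' D)|)
    (g : EuclideanSpace ℝ (Fin n)) (Δ κmg : ℝ)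
    (hacc : ∀ d ∈ D, |⟪g - gradient f x, d⟫| ≤ κmg * Δ) :
    |pim (gradient f x) - pim g| ≤ κmg * Δ := by
  have hne : D.Nonempty := ⟨0, by simp [hD, hx]⟩
  have hbdd : Bornology.IsBounded D :=
    (isBounded_closedBall (x := 0) (r := 1)).subset fun d hd =>
      mem_closedBall_zero_iff.2 (hD ▸ hd).2
  rw [hpim, hpim, abs_sub_comm]
  exact (abs_abs_sub_abs_le_abs_sub _ _).trans (abs_csInf_inner_image_sub_le hne hbdd hacc)

/-- Accuracy of the convex-constrained criticality measure under the gradient accuracy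
condition (Lemma `lem_convex_crit_measure`). -/
theorem convex_criticality_measure_error {n : ℕ}
    (C : Set (EuclideanSpace ℝ (Fin n))) (hCclosed : IsClosed C) (hCconv : Convex ℝ C)
    (x : EuclideanSpace ℝ (Fin n)) (hx : x ∈ C)
    (f : EuclideanSpace ℝ (Fin n) → ℝ) (hf : DifferentiableAt ℝ f x)
    (D : Set (EuclideanSpace ℝ (Fin n)))
    (hD : D = {d : EuclideanSpace ℝ (Fin n) | x + d ∈ C ∧ ‖d‖ ≤ 1})
    (pim : EuclideanSpace ℝ (Fin n) → ℝ)
    (hpim : ∀ v, pim v = |sInf ((fun d => ⟪v, d⟫) '' D)|)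
    (g : EuclideanSpace ℝ (Fin n)) (Δ κmg : ℝ) (hΔ : 0 < Δ) (hκmg : 0 < κmg)
    (hacc : ∀ d ∈ D, |⟪g - gradient f x, d⟫| ≤ κmg * Δ) :
    |pim (gradient f x) - pim g| ≤ κmg * Δ :=
  convex_criticality_measure_error_general C x hx f D hD pim hpim g Δ κmg hacc
end
end

section
/- Let f : EuclideanSpace ℝ (Fin n) → ℝ be twice continuously differentiable, let x ∈ EuclideanSpace ℝ (Fin n), h > 0, and M > 0 be such that the Hessian satisfies ‖∇²f(y)‖ ≤ M (operator norm) for all y in the closed ball B(x,h). Let f̃ : EuclideanSpace ℝ (Fin n) → ℝ and ε_f > 0 satisfy |f̃(y) − f(y)| ≤ ε_f for all y. Define g ∈ EuclideanSpace ℝ (Fin n) by g_i := (f̃(x + h·e_i) − f̃(x))/h for i = 1, …, n, where e_1, …, e_n is the standard orthonormal basis. Then for every i, |g_i − ⟨∇f(x), e_i⟩| ≤ M·h/2 + 2·ε_f/h; that is, ‖g − ∇f(x)‖_∞ ≤ M·h/2 + 2·ε_f/h. -/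
open scoped RealInnerProductSpace
open Metric

noncomputable section

/-! The Hessian bound makes `fderiv f` `M`-Lipschitz on the ball, so Taylor's theorem gives
`|f (x + h eᵢ) - f x - h ∂ᵢf(x)| ≤ M h² / 2`. Replacing `f` by `f̃` at the two sample points adds at
most `2 ε_f` to the numerator, and dividing by `h` yields the bound. -/

section Taylor

variable {E F : Type*} [NormedAddCommGroup E] [NormedSpace ℝ E]
  [NormedAddCommGroup F] [NormedSpace ℝ F]

theorem norm_sub_sub_fderiv_le_of_norm_fderiv_sub_le {f : E → F} {x v : E} {M : ℝ}
    (hf : ∀ y ∈ segment ℝ x (x + v), DifferentiableAt ℝ f y)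
    (hf' : ∀ y ∈ segment ℝ x (x + v), ‖fderiv ℝ f y - fderiv ℝ f x‖ ≤ M * ‖y - x‖) :
    ‖f (x + v) - f x - fderiv ℝ f x v‖ ≤ M / 2 * ‖v‖ ^ 2 := by
  have hseg : ∀ t ∈ Set.Icc (0 : ℝ) 1, x + t • v ∈ segment ℝ x (x + v) := fun t ht => by
    rw [segment_eq_image']
    exact ⟨t, ht, by simp⟩
  set ψ : ℝ → F := fun t => f (x + t • v) - f x - t • fderiv ℝ f x v
  have hψ : ∀ t ∈ Set.Icc (0 : ℝ) 1,
      HasDerivAt ψ (fderiv ℝ f (x + t • v) v - fderiv ℝ f x v) t := fun t ht => by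
    have hline : HasDerivAt (fun t : ℝ => x + t • v) v t := by
      simpa using ((hasDerivAt_id t).smul_const v).const_add x
    exact (((hf _ (hseg t ht)).hasFDerivAt.comp_hasDerivAt t hline).sub_const (f x)).sub
      (by simpa using (hasDerivAt_id t).smul_const (fderiv ℝ f x v))
  have hbound : ∀ t ∈ Set.Ico (0 : ℝ) 1,
      ‖fderiv ℝ f (x + t • v) v - fderiv ℝ f x v‖ ≤ M * ‖v‖ ^ 2 * t := fun t ht => by
    have hlip := hf' _ (hseg t (Set.Ico_subset_Icc_self ht))
    rw [add_sub_cancel_left, norm_smul, Real.norm_of_nonneg ht.1] at hlip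
    calc ‖fderiv ℝ f (x + t • v) v - fderiv ℝ f x v‖
        = ‖(fderiv ℝ f (x + t • v) - fderiv ℝ f x) v‖ := rfl
      _ ≤ ‖fderiv ℝ f (x + t • v) - fderiv ℝ f x‖ * ‖v‖ := ContinuousLinearMap.le_opNorm _ _
      _ ≤ M * (t * ‖v‖) * ‖v‖ := by gcongr
      _ = M * ‖v‖ ^ 2 * t := by ring
  have hB : ∀ t, HasDerivAt (fun t : ℝ => M / 2 * ‖v‖ ^ 2 * t ^ 2) (M * ‖v‖ ^ 2 * t) t := fun t => by
    refine ((hasDerivAt_pow 2 t).const_mul (M / 2 * ‖v‖ ^ 2)).congr_deriv ?_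
    push_cast
    ring
  have hψ_one := image_norm_le_of_norm_deriv_right_le_deriv_boundary
    (fun t ht => (hψ t ht).continuousAt.continuousWithinAt)
    (fun t ht => (hψ t (Set.Ico_subset_Icc_self ht)).hasDerivWithinAt)
    (by simp [ψ]) hB hbound (Set.right_mem_Icc.2 zero_le_one)
  simpa [ψ] using hψ_one

end Taylor

section Gradient

variable {E : Type*} [NormedAddCommGroup E] [InnerProductSpace ℝ E] [CompleteSpace E]
  {f : E → ℝ} {x v : E} {M : ℝ}

theorem ContDiff.differentiable_gradient (hf : ContDiff ℝ 2 f) : Differentiable ℝ (gradient f) :=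
  ((InnerProductSpace.toDual ℝ E).symm.contDiff.comp
    (hf.fderiv_right le_rfl)).differentiable one_ne_zero

theorem Convex.norm_fderiv_sub_le_of_norm_fderiv_gradient_le {s : Set E} {y : E}
    (hs : Convex ℝ s) (hgrad : ∀ z ∈ s, DifferentiableAt ℝ (gradient f) z)
    (hHess : ∀ z ∈ s, ‖fderiv ℝ (gradient f) z‖ ≤ M) (hx : x ∈ s) (hy : y ∈ s) :
    ‖fderiv ℝ f y - fderiv ℝ f x‖ ≤ M * ‖y - x‖ := by
  rw [← toDual_gradient, ← toDual_gradient, ← map_sub, LinearIsometryEquiv.norm_map]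
  exact hs.norm_image_sub_le_of_norm_fderiv_le hgrad hHess hx hy

theorem abs_sub_sub_inner_gradient_le_of_norm_fderiv_gradient_le (hf : ContDiff ℝ 2 f)
    (hHess : ∀ y ∈ closedBall x ‖v‖, ‖fderiv ℝ (gradient f) y‖ ≤ M) :
    |f (x + v) - f x - ⟪gradient f x, v⟫| ≤ M / 2 * ‖v‖ ^ 2 := by
  have hseg : segment ℝ x (x + v) ⊆ closedBall x ‖v‖ :=
    (convex_closedBall x ‖v‖).segment_subset (mem_closedBall_self (norm_nonneg v)) (by simp)
  rw [inner_gradient_left, ← Real.norm_eq_abs]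
  exact norm_sub_sub_fderiv_le_of_norm_fderiv_sub_le
    (fun y _ => hf.differentiable two_ne_zero y)
    (fun y hy => (convex_closedBall x ‖v‖).norm_fderiv_sub_le_of_norm_fderiv_gradient_le
      (fun z _ => hf.differentiable_gradient z) hHess
      (mem_closedBall_self (norm_nonneg v)) (hseg hy))

end Gradient

theorem abs_sub_sub_le_add_of_abs_sub_le {α : Type*} {f f' : α → ℝ} {ε : ℝ}
    (hε : ∀ y, |f' y - f y| ≤ ε) (a b : α) (d : ℝ) :
    |f' b - f' a - d| ≤ |f b - f a - d| + 2 * ε :=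
  calc |f' b - f' a - d| = |(f b - f a - d) + (f' b - f b) + (f a - f' a)| := by
        congr 1; ring
    _ ≤ |f b - f a - d| + |f' b - f b| + |f a - f' a| := abs_add_three _ _ _
    _ ≤ |f b - f a - d| + ε + ε := by
        gcongr
        · exact hε b
        · exact abs_sub_comm (f a) (f' a) ▸ hε a
    _ = |f b - f a - d| + 2 * ε := by ring

theorem noisy_finite_difference_error_general {n : ℕ}
    (f : EuclideanSpace ℝ (Fin n) → ℝ) (hf : ContDiff ℝ 2 f)
    (x : EuclideanSpace ℝ (Fin n)) (h : ℝ) (hh : 0 < h)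
    (M : ℝ)
    (hHess : ∀ y ∈ closedBall x h, ‖fderiv ℝ (gradient f) y‖ ≤ M)
    (ftil : EuclideanSpace ℝ (Fin n) → ℝ) (εf : ℝ)
    (hnoise : ∀ y, |ftil y - f y| ≤ εf)
    (g : EuclideanSpace ℝ (Fin n))
    (hg : ∀ i : Fin n,
      g i = (ftil (x + h • EuclideanSpace.single i 1) - ftil x) / h) :
    ∀ i : Fin n,
      |g i - ⟪gradient f x, EuclideanSpace.single i 1⟫| ≤ M * h / 2 + 2 * εf / h := by
  intro i
  set e : EuclideanSpace ℝ (Fin n) := EuclideanSpace.single i 1 with he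
  have hv : ‖h • e‖ = h := by simp [e, norm_smul, abs_of_pos hh]
  have htaylor := abs_sub_sub_inner_gradient_le_of_norm_fderiv_gradient_le hf (hv ▸ hHess)
  have hnoisy := abs_sub_sub_le_add_of_abs_sub_le hnoise x (x + h • e) ⟪gradient f x, h • e⟫
  have hquot : g i - ⟪gradient f x, e⟫ =
      (ftil (x + h • e) - ftil x - ⟪gradient f x, h • e⟫) / h := by
    rw [hg i, ← he, real_inner_smul_right]
    field_simp
  rw [hv] at htaylor
  rw [hquot, abs_div, abs_of_pos hh, div_le_iff₀ hh]
  calc |ftil (x + h • e) - ftil x - ⟪gradient f x, h • e⟫| ≤ M / 2 * h ^ 2 + 2 * εf := by linarith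
    _ = (M * h / 2 + 2 * εf / h) * h := by field_simp

/-- Error bound for forward finite differencing of a noisy zeroth-order oracle
(Lemma `lem_noisy_fin_diff`). -/
theorem noisy_finite_difference_error {n : ℕ}
    (f : EuclideanSpace ℝ (Fin n) → ℝ) (hf : ContDiff ℝ 2 f)
    (x : EuclideanSpace ℝ (Fin n)) (h : ℝ) (hh : 0 < h)
    (M : ℝ) (hM : 0 < M)
    (hHess : ∀ y ∈ closedBall x h, ‖fderiv ℝ (gradient f) y‖ ≤ M)
    (ftil : EuclideanSpace ℝ (Fin n) → ℝ) (εf : ℝ) (hεf : 0 < εf)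
    (hnoise : ∀ y, |ftil y - f y| ≤ εf)
    (g : EuclideanSpace ℝ (Fin n))
    (hg : ∀ i : Fin n,
      g i = (ftil (x + h • EuclideanSpace.single i 1) - ftil x) / h) :
    ∀ i : Fin n,
      |g i - ⟪gradient f x, EuclideanSpace.single i 1⟫| ≤ M * h / 2 + 2 * εf / h :=
  noisy_finite_difference_error_general f hf x h hh M hHess ftil εf hnoise g hg
end
end

section
/- Let x ∈ EuclideanSpace ℝ (Fin n), Δ > 0, ε > 0, and for i ∈ {1,2} let m_i(y) := c_i + ⟨g_i, y − x⟩ + (1/2)·⟨y − x, H_i·(y − x)⟩ with c_i ∈ ℝ, g_i ∈ EuclideanSpace ℝ (Fin n), and H_i a symmetric n×n real matrix. If |m_1(y) − m_2(y)| ≤ ε for all y in the closed ball B(x,Δ), then |c_1 − c_2| ≤ ε, ‖g_1 − g_2‖ ≤ 10·ε/Δ, and ‖H_1 − H_2‖ ≤ 24·ε/Δ², where ‖H_1 − H_2‖ is the operator norm induced by the Euclidean vector norm. -/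
/-!
Subtracting the two models, `φ d = c + ⟪g, d⟫ + ½⟪d, H d⟫` (with `c, g, H` the differences of
the coefficients) is bounded by `ε` on the ball `‖d‖ ≤ Δ`. Its value at `0`, its odd part and its
even part isolate `c`, `⟪g, d⟫` and `⟪H d, d⟫`, with bounds `ε`, `ε` and `4ε`. Rescaling `d` to
the sphere of radius `Δ` gives `‖g‖ ≤ ε / Δ`, and, since the norm of the symmetric `H` is the
supremum of its Rayleigh quotient, `‖H‖ ≤ 4ε / Δ²`.
-/

open scoped RealInnerProductSpace
open Metric

noncomputable section

section QuadraticModel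

variable {E : Type*} [NormedAddCommGroup E] [InnerProductSpace ℝ E]

theorem norm_le_div_of_abs_inner_le {g : E} {Δ ε : ℝ} (hΔ : 0 < Δ)
    (h : ∀ d : E, ‖d‖ ≤ Δ → |⟪g, d⟫| ≤ ε) : ‖g‖ ≤ ε / Δ := by
  rcases eq_or_ne g 0 with rfl | hg
  · simpa using div_nonneg (by simpa using h 0 (by simpa using hΔ.le)) hΔ.le
  have hgpos : 0 < ‖g‖ := norm_pos_iff.mpr hg
  have hd : ‖(Δ / ‖g‖) • g‖ ≤ Δ := by
    rw [norm_smul, Real.norm_of_nonneg (by positivity), div_mul_cancel₀ _ hgpos.ne']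
  have := h _ hd
  rw [real_inner_smul_right, real_inner_self_eq_norm_sq, abs_of_nonneg (by positivity)] at this
  rw [le_div_iff₀ hΔ]
  calc ‖g‖ * Δ = Δ / ‖g‖ * ‖g‖ ^ 2 := by field_simp
    _ ≤ ε := this

theorem ContinuousLinearMap.norm_le_div_sq_of_abs_inner_self_le {T : E →L[ℝ] E}
    (hT : (T : E →ₗ[ℝ] E).IsSymmetric) {Δ ε : ℝ} (hΔ : 0 < Δ)
    (h : ∀ d : E, ‖d‖ ≤ Δ → |⟪T d, d⟫| ≤ ε) : ‖T‖ ≤ ε / Δ ^ 2 := by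
  have hε : 0 ≤ ε := by simpa using h 0 (by simpa using hΔ.le)
  rw [T.norm_eq_iSup_rayleighQuotient hT]
  refine ciSup_le fun x => ?_
  rcases eq_or_ne x 0 with rfl | hx
  · simpa using div_nonneg hε (sq_nonneg Δ)
  have hxpos : 0 < ‖x‖ := norm_pos_iff.mpr hx
  have hd : ‖(Δ / ‖x‖) • x‖ = Δ := by
    rw [norm_smul, Real.norm_of_nonneg (by positivity), div_mul_cancel₀ _ hxpos.ne']
  rw [← T.rayleigh_smul x (div_pos hΔ hxpos).ne', rayleighQuotient, reApplyInnerSelf_apply,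
    RCLike.re_to_real, hd, abs_div, abs_sq]
  exact div_le_div_of_nonneg_right (h _ hd.le) (sq_nonneg Δ)

variable {c : ℝ} {g : E} {T : E →L[ℝ] E} {Δ ε : ℝ}

theorem abs_const_le_of_abs_quadratic_le (hΔ : 0 ≤ Δ)
    (h : ∀ d : E, ‖d‖ ≤ Δ → |c + ⟪g, d⟫ + (1 / 2) * ⟪d, T d⟫| ≤ ε) : |c| ≤ ε := by
  simpa using h 0 (by simpa using hΔ)

theorem abs_quadratic_neg_le (h : ∀ d : E, ‖d‖ ≤ Δ → |c + ⟪g, d⟫ + (1 / 2) * ⟪d, T d⟫| ≤ ε)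
    {d : E} (hd : ‖d‖ ≤ Δ) : |c - ⟪g, d⟫ + (1 / 2) * ⟪d, T d⟫| ≤ ε := by
  simpa [inner_neg_right, ← sub_eq_add_neg] using h (-d) (by simpa using hd)

theorem abs_inner_le_of_abs_quadratic_le
    (h : ∀ d : E, ‖d‖ ≤ Δ → |c + ⟪g, d⟫ + (1 / 2) * ⟪d, T d⟫| ≤ ε)
    {d : E} (hd : ‖d‖ ≤ Δ) : |⟪g, d⟫| ≤ ε := by
  have h₁ := abs_le.mp (h d hd)
  have h₂ := abs_le.mp (abs_quadratic_neg_le h hd)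
  exact abs_le.mpr ⟨by linarith, by linarith⟩

theorem abs_inner_self_le_of_abs_quadratic_le (hΔ : 0 ≤ Δ)
    (h : ∀ d : E, ‖d‖ ≤ Δ → |c + ⟪g, d⟫ + (1 / 2) * ⟪d, T d⟫| ≤ ε)
    {d : E} (hd : ‖d‖ ≤ Δ) : |⟪T d, d⟫| ≤ 4 * ε := by
  have h₀ := abs_le.mp (abs_const_le_of_abs_quadratic_le hΔ h)
  have h₁ := abs_le.mp (h d hd)
  have h₂ := abs_le.mp (abs_quadratic_neg_le h hd)
  rw [real_inner_comm]
  exact abs_le.mpr ⟨by linarith, by linarith⟩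

end QuadraticModel

theorem mulVecE_eq_toEuclideanCLM {n : ℕ} (H : Matrix (Fin n) (Fin n) ℝ)
    (v : EuclideanSpace ℝ (Fin n)) :
    mulVecE H v = Matrix.toEuclideanCLM (n := Fin n) (𝕜 := ℝ) H v :=
  rfl

theorem opNorm_le_norm_toEuclideanCLM {n : ℕ} (H : Matrix (Fin n) (Fin n) ℝ) :
    opNorm H ≤ ‖Matrix.toEuclideanCLM (n := Fin n) (𝕜 := ℝ) H‖ := by
  refine Real.sSup_le ?_ (norm_nonneg _)
  rintro r ⟨v, hv, rfl⟩
  rw [mulVecE_eq_toEuclideanCLM]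
  simpa using (Matrix.toEuclideanCLM (n := Fin n) (𝕜 := ℝ) H).le_of_opNorm_le_of_le le_rfl hv

theorem difference_of_quadratic_models_general {n : ℕ}
    (x : EuclideanSpace ℝ (Fin n)) (Δ ε : ℝ) (hΔ : 0 < Δ)
    (c₁ c₂ : ℝ) (g₁ g₂ : EuclideanSpace ℝ (Fin n))
    (H₁ H₂ : Matrix (Fin n) (Fin n) ℝ) (hH₁ : H₁.IsSymm) (hH₂ : H₂.IsSymm)
    (hclose : ∀ y ∈ closedBall x Δ,
      |(c₁ + ⟪g₁, y - x⟫ + (1 / 2) * ⟪y - x, mulVecE H₁ (y - x)⟫) -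
        (c₂ + ⟪g₂, y - x⟫ + (1 / 2) * ⟪y - x, mulVecE H₂ (y - x)⟫)| ≤ ε) :
    |c₁ - c₂| ≤ ε ∧ ‖g₁ - g₂‖ ≤ 10 * ε / Δ ∧ opNorm (H₁ - H₂) ≤ 24 * ε / Δ ^ 2 := by
  set T := Matrix.toEuclideanCLM (n := Fin n) (𝕜 := ℝ) (H₁ - H₂)
  have hT : IsSelfAdjoint T :=
    (Matrix.isHermitian_iff_isSymm.mpr (hH₁.sub hH₂)).isSelfAdjoint.map _
  have hdiff : ∀ d : EuclideanSpace ℝ (Fin n), ‖d‖ ≤ Δ →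
      |(c₁ - c₂) + ⟪g₁ - g₂, d⟫ + (1 / 2) * ⟪d, T d⟫| ≤ ε := fun d hd => by
    have := hclose (x + d) (by simpa [dist_eq_norm] using hd)
    simp only [add_sub_cancel_left, mulVecE_eq_toEuclideanCLM] at this
    simp only [T, map_sub, sub_apply, inner_sub_left, inner_sub_right]
    convert this using 2
    ring
  have hc := abs_const_le_of_abs_quadratic_le hΔ.le hdiff
  have hε : 0 ≤ ε := (abs_nonneg _).trans hc
  refine ⟨hc, ?_, ?_⟩
  · calc ‖g₁ - g₂‖ ≤ ε / Δ :=
          norm_le_div_of_abs_inner_le hΔ fun d => abs_inner_le_of_abs_quadratic_le hdiff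
      _ ≤ 10 * ε / Δ := by gcongr; linarith
  · calc opNorm (H₁ - H₂) ≤ ‖T‖ := opNorm_le_norm_toEuclideanCLM _
      _ ≤ 4 * ε / Δ ^ 2 := T.norm_le_div_sq_of_abs_inner_self_le hT.isSymmetric hΔ
          fun d => abs_inner_self_le_of_abs_quadratic_le hΔ.le hdiff
      _ ≤ 24 * ε / Δ ^ 2 := by gcongr; linarith

/-- Two quadratic functions that are uniformly close on a ball have close constant,
gradient, and Hessian coefficients (Lemma `lem_difference_of_quadratic`). -/
theorem difference_of_quadratic_models {n : ℕ}
    (x : EuclideanSpace ℝ (Fin n)) (Δ ε : ℝ) (hΔ : 0 < Δ) (hε : 0 < ε)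
    (c₁ c₂ : ℝ) (g₁ g₂ : EuclideanSpace ℝ (Fin n))
    (H₁ H₂ : Matrix (Fin n) (Fin n) ℝ) (hH₁ : H₁.IsSymm) (hH₂ : H₂.IsSymm)
    (hclose : ∀ y ∈ closedBall x Δ,
      |(c₁ + ⟪g₁, y - x⟫ + (1 / 2) * ⟪y - x, mulVecE H₁ (y - x)⟫) -
        (c₂ + ⟪g₂, y - x⟫ + (1 / 2) * ⟪y - x, mulVecE H₂ (y - x)⟫)| ≤ ε) :
    |c₁ - c₂| ≤ ε ∧ ‖g₁ - g₂‖ ≤ 10 * ε / Δ ∧ opNorm (H₁ - H₂) ≤ 24 * ε / Δ ^ 2 :=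
  difference_of_quadratic_models_general x Δ ε hΔ c₁ c₂ g₁ g₂ H₁ H₂ hH₁ hH₂ hclose
end
end
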